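/- arXiv:1708.00690 — 4 statements merged into one kernel-verified Lean document; each statement's English description precedes it below -/
import Mathlib

section
/- Let N be odd, let κ(j) := N+1−j, and let σ ∈ S_N be a permutation with κσκ = σ. Define Morse numbers i : {1,…,N} → ℤ by i_1 := 0 and i_{j+1} := i_j + (−1)^{j+1}·sign(σ(j+1) − σ(j)). Then i_{N+1−j} = i_j for all j. -/
/-- Morse numbers of a flip-symmetric Sturm permutation are invariant under
    the flip: i_{N+1-j} = i_j. -/
theorem flip_symmetric_morse_invariant (N : ℕ) (hN : Odd N) (σ : ℕ → ℕ)
    (hbij : Set.BijOn σ (Set.Icc 1 N) (Set.Icc 1 N))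
    (hsym : ∀ j ∈ Set.Icc 1 N, σ (N + 1 - j) = N + 1 - σ j)
    (i : ℕ → ℤ) (h1 : i 1 = 0)
    (hrec : ∀ j, 1 ≤ j → j < N →
      i (j + 1) = i j + (-1 : ℤ) ^ (j + 1) * Int.sign ((σ (j + 1) : ℤ) - (σ j : ℤ))) :
    ∀ j, 1 ≤ j → j ≤ N → i (N + 1 - j) = i j := by
  obtain ⟨t, ht⟩ := hN
  subst ht
  -- bounds on σ
  have hbnd : ∀ j, 1 ≤ j → j ≤ 2 * t + 1 → 1 ≤ σ j ∧ σ j ≤ 2 * t + 1 := by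
    intro j h1j h2j
    have := hbij.mapsTo (Set.mem_Icc.mpr ⟨h1j, h2j⟩)
    exact Set.mem_Icc.mp this
  -- key step: from the statement at j+1 deduce it at j, for 1 ≤ j ≤ t
  have key : ∀ j, 1 ≤ j → j ≤ t → i (2 * t + 2 - (j + 1)) = i (j + 1) →
      i (2 * t + 2 - j) = i j := by
    intro j hj1 hjt IH
    have hb1 := hbnd j hj1 (by omega)
    have hb2 := hbnd (j + 1) (by omega) (by omega)
    -- symmetry values
    have hs1 : σ (2 * t + 2 - j) = 2 * t + 2 - σ j := by
      have := hsym j (Set.mem_Icc.mpr ⟨hj1, by omega⟩)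
      simpa using this
    have hs2 : σ (2 * t + 1 - j) = 2 * t + 2 - σ (j + 1) := by
      have := hsym (j + 1) (Set.mem_Icc.mpr ⟨by omega, by omega⟩)
      have e : 2 * t + 1 + 1 - (j + 1) = 2 * t + 1 - j := by omega
      rw [e] at this
      simpa using this
    -- recursion at index 2t+1-j
    have hrec2 := hrec (2 * t + 1 - j) (by omega) (by omega)
    have e2 : 2 * t + 1 - j + 1 = 2 * t + 2 - j := by omega
    rw [e2] at hrec2
    -- rewrite the sign term
    have hc1 : ((σ (2 * t + 2 - j) : ℤ)) = 2 * t + 2 - (σ j : ℤ) := by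
      rw [hs1]
      have : σ j ≤ 2 * t + 2 := by omega
      push_cast [this]
      ring
    have hc2 : ((σ (2 * t + 1 - j) : ℤ)) = 2 * t + 2 - (σ (j + 1) : ℤ) := by
      rw [hs2]
      have : σ (j + 1) ≤ 2 * t + 2 := by omega
      push_cast [this]
      ring
    have hdiff : (σ (2 * t + 2 - j) : ℤ) - (σ (2 * t + 1 - j) : ℤ)
        = (σ (j + 1) : ℤ) - (σ j : ℤ) := by
      rw [hc1, hc2]; ring
    -- power parity
    have hpow : ((-1 : ℤ)) ^ (2 * t + 2 - j) = -(-1 : ℤ) ^ (j + 1) := by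
      have e3 : 2 * t + 2 - j = (2 * t + 3) - (j + 1) := by omega
      rw [e3]
      have hle : j + 1 ≤ 2 * t + 3 := by omega
      have : ((-1 : ℤ)) ^ ((2 * t + 3) - (j + 1)) * (-1 : ℤ) ^ (j + 1)
          = (-1 : ℤ) ^ (2 * t + 3) := by
        rw [← pow_add]
        congr 1
        omega
      have hodd : ((-1 : ℤ)) ^ (2 * t + 3) = -1 := by
        exact Odd.neg_one_pow ⟨t + 1, by ring⟩
      have hsq : ((-1 : ℤ)) ^ (j + 1) * (-1 : ℤ) ^ (j + 1) = 1 := by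
        rw [← pow_add]
        exact Even.neg_one_pow ⟨j + 1, by ring⟩
      calc ((-1 : ℤ)) ^ ((2 * t + 3) - (j + 1))
          = ((-1 : ℤ)) ^ ((2 * t + 3) - (j + 1)) * ((-1 : ℤ) ^ (j + 1) * (-1 : ℤ) ^ (j + 1)) := by
            rw [hsq, mul_one]
        _ = ((-1 : ℤ)) ^ (2 * t + 3) * (-1 : ℤ) ^ (j + 1) := by
            rw [← mul_assoc, this]
        _ = -(-1 : ℤ) ^ (j + 1) := by rw [hodd]; ring
    have hrec1 := hrec j hj1 (by omega)
    have e4 : 2 * t + 2 - (j + 1) = 2 * t + 1 - j := by omega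
    rw [e4] at IH
    rw [hrec2, hdiff, hpow, IH, hrec1]
    ring
  -- statement for all j with 1 ≤ j ≤ t+1, by downward induction
  have main : ∀ k, k ≤ t → i (2 * t + 2 - (t + 1 - k)) = i (t + 1 - k) := by
    intro k
    induction k with
    | zero =>
      intro _
      have e : 2 * t + 2 - (t + 1 - 0) = t + 1 - 0 := by omega
      rw [e]
    | succ k ih =>
      intro hk
      have IH := ih (by omega)
      have e : t + 1 - k = (t + 1 - (k + 1)) + 1 := by omega
      rw [e] at IH
      exact key (t + 1 - (k + 1)) (by omega) (by omega) IH
  have main' : ∀ j, 1 ≤ j → j ≤ t + 1 → i (2 * t + 2 - j) = i j := by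
    intro j h1j h2j
    have := main (t + 1 - j) (by omega)
    have e : t + 1 - (t + 1 - j) = j := by omega
    rwa [e] at this
  intro j h1j h2j
  by_cases hc : j ≤ t + 1
  · have := main' j h1j hc
    have e : 2 * t + 1 + 1 - j = 2 * t + 2 - j := by omega
    rw [e]; exact this
  · have := main' (2 * t + 2 - j) (by omega) (by omega)
    have e : 2 * t + 2 - (2 * t + 2 - j) = j := by omega
    rw [e] at this
    have e2 : 2 * t + 1 + 1 - j = 2 * t + 2 - j := by omega
    rw [e2]
    exact this.symm
end

section
/- Let N be odd, κ(j) := N+1−j, and let σ ∈ S_N satisfy κσκ = σ. Define Morse numbers i : {1,…,N} → ℤ by i_1 = 0 and i_{j+1} = i_j + (−1)^{j+1} sign(σ(j+1) − σ(j)), and for each integer m let c_m := #{j : i_j = m}. Then there is exactly one m with c_m odd, namely m_* := i_{(N+1)/2}; all other counts c_m are even. Moreover m_* is even if and only if N ≡ 1 (mod 4), and m_* is odd if and only if N ≡ 3 (mod 4). -/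
/-!
Flip symmetry gives `σ (N - j + 1) - σ (N - j) = σ (j + 1) - σ j`, while the signs `(-1) ^ (j + 1)`
and `(-1) ^ (N - j + 1)` are opposite because `N` is odd; so the Morse increments at `j` and `N - j`
cancel and the Morse numbers are palindromic, `i (N + 1 - j) = i j`. Hence `j ↦ N + 1 - j` is an
involution of each level set `{j | i j = m}` whose only possible fixed point is the middle
`(N + 1) / 2`, so `c_m` is odd exactly for `m = i ((N + 1) / 2)`. Every increment is `±1`, so
`i j ≡ j + 1 (mod 2)`, which gives the parity of `m_*` from that of `(N + 1) / 2`.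
-/

open Finset

namespace Finset

variable {ι : Type*} {s : Finset ι}

lemma even_card_of_involution (g : ι → ι) (hg_mem : ∀ a ∈ s, g a ∈ s)
    (hg_inv : ∀ a ∈ s, g (g a) = a) (hg_ne : ∀ a ∈ s, g a ≠ a) : Even #s := by
  rw [← ZMod.natCast_eq_zero_iff_even, card_eq_sum_ones, Nat.cast_sum]
  exact sum_involution (fun a _ => g a) (fun _ _ => rfl) (fun a ha _ => hg_ne a ha) hg_mem hg_inv

lemma odd_card_iff_mem_of_involution [DecidableEq ι] (g : ι → ι) (c : ι)
    (hg_mem : ∀ a ∈ s, g a ∈ s) (hg_inv : ∀ a ∈ s, g (g a) = a)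
    (hg_fix : ∀ a ∈ s, g a = a ↔ a = c) : Odd #s ↔ c ∈ s := by
  by_cases hc : c ∈ s
  · have hgc : g c = c := (hg_fix c hc).2 rfl
    have h_erase : Even #(s.erase c) := by
      refine even_card_of_involution g (fun a ha => ?_) (fun a ha => hg_inv a (mem_of_mem_erase ha))
        (fun a ha h => ne_of_mem_erase ha ((hg_fix a (mem_of_mem_erase ha)).1 h))
      obtain ⟨hac, has⟩ := mem_erase.1 ha
      refine mem_erase.2 ⟨fun h => hac ?_, hg_mem a has⟩
      rw [← hg_inv a has, h, hgc]
    rw [← card_erase_add_one hc, iff_true_intro hc, iff_true]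
    exact h_erase.add_one
  · have h_even : Even #s :=
      even_card_of_involution g hg_mem hg_inv fun a ha h => hc ((hg_fix a ha).1 h ▸ ha)
    simp [hc, h_even]

end Finset

lemma eq_of_forall_succ_eq {α : Type*} {f : ℕ → α} {a b : ℕ}
    (h : ∀ j, a ≤ j → j < b → f (j + 1) = f j) : ∀ j ∈ Set.Icc a b, f j = f a := by
  rintro j ⟨haj, hjb⟩
  induction j, haj using Nat.le_induction with
  | base => rfl
  | succ j haj ih => rw [h j haj (by omega), ih (by omega)]

lemma odd_card_filter_iff_of_palindrome {α : Type*} [DecidableEq α] {N : ℕ} (hN : Odd N)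
    {f : ℕ → α} (hf : ∀ j ∈ Set.Icc 1 N, f (N + 1 - j) = f j) (m : α) :
    Odd #{j ∈ Icc 1 N | f j = m} ↔ m = f ((N + 1) / 2) := by
  have hN2 : N % 2 = 1 := Nat.odd_iff.1 hN
  rw [odd_card_iff_mem_of_involution (fun j => N + 1 - j) ((N + 1) / 2)] <;>
    simp only [mem_filter, mem_Icc]
  · exact ⟨fun h => h.2.symm, fun h => ⟨by omega, h.symm⟩⟩
  · rintro a ⟨⟨ha1, haN⟩, rfl⟩
    exact ⟨by omega, hf a ⟨ha1, haN⟩⟩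
  · omega
  · omega

def morseStep (σ : ℕ → ℕ) (j : ℕ) : ℤ := (-1) ^ (j + 1) * Int.sign ((σ (j + 1) : ℤ) - σ j)

lemma odd_morseStep {σ : ℕ → ℕ} {j : ℕ} (h : σ (j + 1) ≠ σ j) : Odd (morseStep σ j) :=
  (odd_neg_one.pow).mul (Int.odd_sign_iff.2 (sub_ne_zero.2 (by exact_mod_cast h)))

lemma morseStep_eq_neg {σ : ℕ → ℕ} {j k : ℕ} (hjk : Odd (j + k))
    (hσ : (σ (k + 1) : ℤ) - σ k = σ (j + 1) - σ j) : morseStep σ k = -morseStep σ j := by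
  have hprod : (-1 : ℤ) ^ (k + 1) * (-1) ^ (j + 1) = -1 := by
    rw [← pow_add, show k + 1 + (j + 1) = j + k + 2 by ring, pow_add, hjk.neg_one_pow]
    norm_num
  have hpow : (-1 : ℤ) ^ (k + 1) = -(-1) ^ (j + 1) := by
    rcases neg_one_pow_eq_or ℤ (j + 1) with h | h <;> rw [h] at hprod ⊢ <;> linarith
  rw [morseStep, morseStep, hσ, hpow, neg_mul]

section MorseNumbers

variable {N : ℕ} {σ : ℕ → ℕ} {i : ℕ → ℤ}

theorem odd_morse_add_index (hinj : Set.InjOn σ (Set.Icc 1 N)) (h1 : i 1 = 0)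
    (hrec : ∀ j, 1 ≤ j → j < N → i (j + 1) = i j + morseStep σ j) :
    ∀ j ∈ Set.Icc 1 N, Odd (i j + j) := by
  rintro j ⟨hj1, hjN⟩
  induction j, hj1 using Nat.le_induction with
  | base => simp [h1]
  | succ j hj ih =>
    have hne : σ (j + 1) ≠ σ j := fun h => by
      have := hinj ⟨by omega, hjN⟩ ⟨hj, by omega⟩ h
      omega
    have hsum : i (j + 1) + ((j + 1 : ℕ) : ℤ) = (i j + j + morseStep σ j) + 1 := by
      rw [hrec j hj (by omega)]
      push_cast
      ring
    rw [hsum]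
    exact ((ih (by omega)).add_odd (odd_morseStep hne)).add_one

theorem morse_palindrome (hN : Odd N) (hmaps : Set.MapsTo σ (Set.Icc 1 N) (Set.Icc 1 N))
    (hsym : ∀ j ∈ Set.Icc 1 N, σ (N + 1 - j) = N + 1 - σ j)
    (hrec : ∀ j, 1 ≤ j → j < N → i (j + 1) = i j + morseStep σ j) :
    ∀ j ∈ Set.Icc 1 N, i (N + 1 - j) = i j := by
  have hN2 : N % 2 = 1 := Nat.odd_iff.1 hN
  have hflip : ∀ j ∈ Set.Icc 1 N, (σ (N + 1 - j) : ℤ) = N + 1 - σ j := fun j hj => by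
    have := (hmaps hj).2
    rw [hsym j hj]
    omega
  have hstep : ∀ j, 1 ≤ j → j < N → morseStep σ (N - j) = -morseStep σ j := fun j hj1 hjN =>
    morseStep_eq_neg (by rwa [Nat.add_sub_cancel' hjN.le]) <| by
      rw [show N - j + 1 = N + 1 - j by omega, show N - j = N + 1 - (j + 1) by omega,
        hflip j ⟨hj1, hjN.le⟩, hflip (j + 1) ⟨by omega, hjN⟩]
      ring
  let d : ℕ → ℤ := fun j => i (N + 1 - j) - i j
  have hd_succ : ∀ j, 1 ≤ j → j < N → d (j + 1) = d j := fun j hj1 hjN => by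
    simp only [d]
    rw [show N + 1 - j = N - j + 1 by omega, hrec (N - j) (by omega) (by omega), hrec j hj1 hjN,
      hstep j hj1 hjN, show N + 1 - (j + 1) = N - j by omega]
    ring
  have hd_mid : d ((N + 1) / 2) = 0 := by
    simp only [d, show N + 1 - (N + 1) / 2 = (N + 1) / 2 by omega, sub_self]
  intro j hj
  have := (eq_of_forall_succ_eq hd_succ j hj).trans
    (eq_of_forall_succ_eq hd_succ ((N + 1) / 2) ⟨by omega, by omega⟩).symm
  rw [hd_mid] at this
  exact sub_eq_zero.1 this

end MorseNumbers

/-- Proposition 3.1: for a flip-symmetric Sturm permutation, all Morse-index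
    counts c_m are even except for the unique odd count at m_* = i_{(N+1)/2},
    whose parity is determined by N mod 4. -/
theorem flip_symmetric_cell_counts (N : ℕ) (hN : Odd N) (σ : ℕ → ℕ)
    (hbij : Set.BijOn σ (Set.Icc 1 N) (Set.Icc 1 N))
    (hsym : ∀ j ∈ Set.Icc 1 N, σ (N + 1 - j) = N + 1 - σ j)
    (i : ℕ → ℤ) (h1 : i 1 = 0)
    (hrec : ∀ j, 1 ≤ j → j < N →
      i (j + 1) = i j + (-1 : ℤ) ^ (j + 1) * Int.sign ((σ (j + 1) : ℤ) - (σ j : ℤ))) :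
    (∀ m : ℤ,
      Odd (((Finset.Icc 1 N).filter (fun j => i j = m)).card) ↔ m = i ((N + 1) / 2)) ∧
    (Even (i ((N + 1) / 2)) ↔ N % 4 = 1) ∧
    (Odd (i ((N + 1) / 2)) ↔ N % 4 = 3) := by
  have hN2 : N % 2 = 1 := Nat.odd_iff.1 hN
  have hmid : (N + 1) / 2 ∈ Set.Icc 1 N := ⟨by omega, by omega⟩
  have hpar : Odd (i ((N + 1) / 2)) ↔ Even ((N + 1) / 2) := by
    rw [← Int.even_coe_nat]
    exact Int.odd_add.1 (odd_morse_add_index hbij.injOn h1 hrec _ hmid)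
  refine ⟨odd_card_filter_iff_of_palindrome hN (morse_palindrome hN hbij.mapsTo hsym hrec), ?_, ?_⟩
  · rw [← Int.not_odd_iff_even, hpar, Nat.even_iff]
    omega
  · rw [hpar, Nat.even_iff]
    omega
end

section
/- Let N be odd, κ(j) := N+1−j, and let σ ∈ S_N satisfy κσκ = σ. Define Morse numbers i_j by i_1 = 0 and i_{j+1} = i_j + (−1)^{j+1} sign(σ(j+1) − σ(j)). Suppose there is exactly one index j with i_j = 3 and that i_j ≤ 3 for all j (the Sturm 3-ball case). Then N ≡ 3 (mod 4), and each of the counts c_0, c_1, c_2 of indices j with i_j = 0, 1, 2 respectively is even. -/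
/-- Even cardinality from a fixed-point-free involution. -/
lemma even_card_of_invol {s : Finset ℕ} (g : ℕ → ℕ)
    (g_mem : ∀ a ∈ s, g a ∈ s) (g_inv : ∀ a ∈ s, g (g a) = a)
    (g_ne : ∀ a ∈ s, g a ≠ a) : Even s.card := by
  have h0 : ∑ _x ∈ s, (1 : ZMod 2) = 0 :=
    Finset.sum_involution (fun a _ => g a) (by intros; decide)
      (fun a ha _ => g_ne a ha) (fun a ha => g_mem a ha)
      (fun a ha => g_inv a ha)
  have h1 : ((s.card : ℕ) : ZMod 2) = 0 := by simpa using h0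
  exact even_iff_two_dvd.mpr ((ZMod.natCast_eq_zero_iff s.card 2).mp h1)

/-- Corollary 3.2: a flip-symmetric Sturm permutation of a Sturm 3-ball
    (exactly one Morse number 3, none exceeding 3) has N ≡ 3 (mod 4)
    equilibria, with even counts of sinks, saddles, and sources. -/
theorem flip_symmetric_three_ball (N : ℕ) (hN : Odd N) (σ : ℕ → ℕ)
    (hbij : Set.BijOn σ (Set.Icc 1 N) (Set.Icc 1 N))
    (hsym : ∀ j ∈ Set.Icc 1 N, σ (N + 1 - j) = N + 1 - σ j)
    (i : ℕ → ℤ) (h1 : i 1 = 0)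
    (hrec : ∀ j, 1 ≤ j → j < N →
      i (j + 1) = i j + (-1 : ℤ) ^ (j + 1) * Int.sign ((σ (j + 1) : ℤ) - (σ j : ℤ)))
    (hunique : ((Finset.Icc 1 N).filter (fun j => i j = 3)).card = 1)
    (hle : ∀ j ∈ Finset.Icc 1 N, i j ≤ 3) :
    N % 4 = 3 ∧
    Even (((Finset.Icc 1 N).filter (fun j => i j = 0)).card) ∧
    Even (((Finset.Icc 1 N).filter (fun j => i j = 1)).card) ∧
    Even (((Finset.Icc 1 N).filter (fun j => i j = 2)).card) := by
  obtain ⟨m, hm⟩ := hN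
  have hN1 : 1 ≤ N := by omega
  -- σ maps [1,N] into [1,N]
  have hσ : ∀ j, 1 ≤ j → j ≤ N → 1 ≤ σ j ∧ σ j ≤ N := by
    intro j hj1 hj2
    have := hbij.mapsTo (Set.mem_Icc.mpr ⟨hj1, hj2⟩)
    exact Set.mem_Icc.mp this
  -- each step is ±1
  have hstep : ∀ j, 1 ≤ j → j < N → i (j + 1) - i j = 1 ∨ i (j + 1) - i j = -1 := by
    intro j hj1 hjN
    have h := hrec j hj1 hjN
    have hne : (σ (j + 1) : ℤ) - (σ j : ℤ) ≠ 0 := by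
      intro he
      have heq : σ (j + 1) = σ j := by omega
      have := hbij.injOn (Set.mem_Icc.mpr ⟨by omega, by omega⟩)
        (Set.mem_Icc.mpr ⟨hj1, le_of_lt hjN⟩) heq
      omega
    have hs : Int.sign ((σ (j + 1) : ℤ) - (σ j : ℤ)) = 1 ∨
        Int.sign ((σ (j + 1) : ℤ) - (σ j : ℤ)) = -1 := by
      rcases lt_trichotomy ((σ (j + 1) : ℤ) - (σ j : ℤ)) 0 with hlt | heq | hgt
      · right; exact Int.sign_eq_neg_one_of_neg hlt
      · exact absurd heq hne
      · left; exact Int.sign_eq_one_of_pos hgt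
    have hp : (-1 : ℤ) ^ (j + 1) = 1 ∨ (-1 : ℤ) ^ (j + 1) = -1 := by
      rcases Nat.even_or_odd (j + 1) with he | ho
      · left; exact he.neg_one_pow
      · right; exact ho.neg_one_pow
    rcases hs with hs | hs <;> rcases hp with hp | hp <;>
      rw [h, hs, hp] <;> [left; right; right; left] <;> ring
  -- parity of Morse numbers: i j + j + 1 is always even
  have hpar : ∀ j, 1 ≤ j → j ≤ N → Even (i j + (j : ℤ) + 1) := by
    intro j hj
    induction j, hj using Nat.le_induction with
    | base => intro _; rw [h1]; exact ⟨1, by norm_num⟩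
    | succ n hn ih =>
      intro hle'
      obtain ⟨k, hk⟩ := ih (by omega)
      rcases hstep n hn (by omega) with h | h
      · exact ⟨k + 1, by push_cast; omega⟩
      · exact ⟨k, by push_cast; omega⟩
  -- flip symmetry of consecutive differences
  have hsgn : ∀ j, 1 ≤ j → j < N →
      (σ (N + 1 - j) : ℤ) - (σ (N - j) : ℤ) = (σ (j + 1) : ℤ) - (σ j : ℤ) := by
    intro j hj1 hjN
    have e1 := hsym j (Set.mem_Icc.mpr ⟨hj1, le_of_lt hjN⟩)
    have e2 := hsym (j + 1) (Set.mem_Icc.mpr ⟨by omega, by omega⟩)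
    have hσj := hσ j hj1 (le_of_lt hjN)
    have hσj1 := hσ (j + 1) (by omega) (by omega)
    have hNj : N + 1 - (j + 1) = N - j := by omega
    rw [hNj] at e2
    omega
  -- the difference i (N+1-j) - i j is constant in j
  have hd : ∀ j, 1 ≤ j → j < N →
      i (N + 1 - j) - i j = i (N + 1 - (j + 1)) - i (j + 1) := by
    intro j hj1 hjN
    have h₁ := hrec j hj1 hjN
    have h₂ := hrec (N - j) (by omega) (by omega)
    have hNj1 : N - j + 1 = N + 1 - j := by omega
    have hNj2 : N + 1 - (j + 1) = N - j := by omega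
    rw [hNj1, hsgn j hj1 hjN] at h₂
    have hpow : (-1 : ℤ) ^ (N + 1 - j) = -(-1 : ℤ) ^ (j + 1) := by
      rcases Nat.even_or_odd (j + 1) with he | ho
      · have ho' : Odd (N + 1 - j) := by
          rw [Nat.even_iff] at he; rw [Nat.odd_iff]; omega
        rw [he.neg_one_pow, ho'.neg_one_pow]
      · have he' : Even (N + 1 - j) := by
          rw [Nat.odd_iff] at ho; rw [Nat.even_iff]; omega
        rw [ho.neg_one_pow, he'.neg_one_pow]; norm_num
    rw [hpow] at h₂
    rw [hNj2]
    linarith [h₁, h₂]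
  have hdc : ∀ j, 1 ≤ j → j ≤ N → i (N + 1 - j) - i j = i N - i 1 := by
    intro j hj
    induction j, hj using Nat.le_induction with
    | base => intro _; norm_num
    | succ n hn ih =>
      intro hle'
      rw [← hd n hn (by omega)]
      exact ih (by omega)
  -- evaluate at midpoint m+1 (N = 2m+1): difference is 0
  have hmid : i N - i 1 = 0 := by
    have := hdc (m + 1) (by omega) (by omega)
    have hmm : N + 1 - (m + 1) = m + 1 := by omega
    rw [hmm] at this
    omega
  have hsymI : ∀ j, 1 ≤ j → j ≤ N → i (N + 1 - j) = i j := by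
    intro j hj1 hj2
    have := hdc j hj1 hj2
    omega
  -- the unique j with i j = 3 is the fixed point of the flip
  obtain ⟨a, ha⟩ := Finset.card_eq_one.mp hunique
  have haS : a ∈ (Finset.Icc 1 N).filter (fun j => i j = 3) := by
    rw [ha]; exact Finset.mem_singleton_self a
  have haI : a ∈ Finset.Icc 1 N := Finset.mem_of_mem_filter a haS
  have ha3 : i a = 3 := (Finset.mem_filter.mp haS).2
  have haIcc := Finset.mem_Icc.mp haI
  have haS' : N + 1 - a ∈ (Finset.Icc 1 N).filter (fun j => i j = 3) := by
    refine Finset.mem_filter.mpr ⟨Finset.mem_Icc.mpr ⟨by omega, by omega⟩, ?_⟩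
    rw [hsymI a haIcc.1 haIcc.2]; exact ha3
  have hfix : N + 1 - a = a := by
    rw [ha] at haS'; exact Finset.mem_singleton.mp haS'
  have h2a : N + 1 = 2 * a := by omega
  -- a is even from parity, so N ≡ 3 mod 4
  obtain ⟨k, hk⟩ := hpar a haIcc.1 haIcc.2
  rw [ha3] at hk
  have hmod : N % 4 = 3 := by omega
  refine ⟨hmod, ?_, ?_, ?_⟩ <;>
  · apply even_card_of_invol (fun j => N + 1 - j)
    · intro b hb
      have hb' := Finset.mem_filter.mp hb
      have hbI := Finset.mem_Icc.mp hb'.1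
      refine Finset.mem_filter.mpr ⟨Finset.mem_Icc.mpr ⟨by omega, by omega⟩, ?_⟩
      simp only [hsymI b hbI.1 hbI.2]
      exact hb'.2
    · intro b hb
      have hbI := Finset.mem_Icc.mp (Finset.mem_of_mem_filter b hb)
      omega
    · intro b hb hbe
      have hb' := Finset.mem_filter.mp hb
      have hbI := Finset.mem_Icc.mp hb'.1
      have : b = a := by omega
      rw [this, ha3] at hb'
      omega
end

section
/- Let m ≥ 1, N := 2m + 1, and define σ : {1,…,N} → {1,…,N} by σ(j) = j for j odd and σ(j) = N + 1 − j for j even. Then σ is an involutive permutation with σ(1) = 1 and σ(N) = N, and the Morse numbers defined by i_1 := 0 and i_{j+1} := i_j + (−1)^{j+1} sign(σ(j+1) − σ(j)) satisfy i_j = min(j − 1, N − j) for all j. In particular i_j ≥ 0 for all j, i_N = 0, and there is exactly one index (j = m + 1) where i_j attains the maximal value m. -/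
/-- The Chafee-Infante permutation with N = 2m+1 equilibria: an involution
    fixing 1 and N, with Morse numbers i_j = min(j-1, N-j), all nonnegative,
    vanishing at N, and attaining the maximum m exactly at j = m+1. -/
theorem chafee_infante_permutation (m : ℕ) (hm : 1 ≤ m) (N : ℕ)
    (hN : N = 2 * m + 1) (σ : ℕ → ℕ)
    (hσ : ∀ j, σ j = if Odd j then j else N + 1 - j)
    (i : ℕ → ℤ) (h1 : i 1 = 0)
    (hrec : ∀ j, 1 ≤ j → j < N →
      i (j + 1) = i j + (-1 : ℤ) ^ (j + 1) * Int.sign ((σ (j + 1) : ℤ) - (σ j : ℤ))) :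
    Set.BijOn σ (Set.Icc 1 N) (Set.Icc 1 N) ∧
    (∀ j ∈ Set.Icc 1 N, σ (σ j) = j) ∧
    σ 1 = 1 ∧ σ N = N ∧
    (∀ j, 1 ≤ j → j ≤ N → i j = min ((j : ℤ) - 1) ((N : ℤ) - j)) ∧
    (∀ j, 1 ≤ j → j ≤ N → 0 ≤ i j) ∧
    i N = 0 ∧
    i (m + 1) = (m : ℤ) ∧
    (∀ j, 1 ≤ j → j ≤ N → i j = (m : ℤ) → j = m + 1) := by
  have hNodd : Odd N := ⟨m, by omega⟩
  have hσ1 : σ 1 = 1 := by rw [hσ, if_pos odd_one]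
  have hσN : σ N = N := by rw [hσ, if_pos hNodd]
  -- involution
  have hinv : ∀ j ∈ Set.Icc 1 N, σ (σ j) = j := by
    intro j hj
    obtain ⟨hj1, hj2⟩ := Set.mem_Icc.mp hj
    by_cases h : Odd j
    · rw [hσ j, if_pos h, hσ j, if_pos h]
    · rw [hσ j, if_neg h, hσ (N + 1 - j)]
      have h2 : ¬ Odd (N + 1 - j) := by
        rw [Nat.odd_iff] at h ⊢; omega
      rw [if_neg h2]; omega
  -- maps to
  have hmaps : Set.MapsTo σ (Set.Icc 1 N) (Set.Icc 1 N) := by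
    intro j hj
    obtain ⟨hj1, hj2⟩ := Set.mem_Icc.mp hj
    rw [Set.mem_Icc, hσ j]
    split <;> omega
  have hbij : Set.BijOn σ (Set.Icc 1 N) (Set.Icc 1 N) := by
    refine ⟨hmaps, ?_, ?_⟩
    · intro a ha b hb hab
      have := hinv a ha
      rw [hab, hinv b hb] at this
      exact this.symm
    · intro y hy
      exact ⟨σ y, hmaps hy, hinv y hy⟩
  -- the step lemma
  have hstep : ∀ j, 1 ≤ j → j < N →
      i (j + 1) = i j + (if j ≤ m then 1 else -1) := by
    intro j h1j hjN
    rw [hrec j h1j hjN, hσ j, hσ (j + 1)]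
    rcases Nat.even_or_odd j with he | ho
    · have ho1 : Odd (j + 1) := Even.add_one he
      have hne : ¬ Odd j := Nat.not_odd_iff_even.mpr he
      rw [if_pos ho1, if_neg hne, Odd.neg_one_pow ho1]
      have hcast : ((N + 1 - j : ℕ) : ℤ) = (N : ℤ) + 1 - j := by omega
      rw [hcast]
      by_cases hjm : j ≤ m
      · have : (((j + 1 : ℕ) : ℤ) - ((N : ℤ) + 1 - j)).sign = -1 := by
          rw [Int.sign_eq_neg_one_iff_neg]; push_cast; omega
        rw [this, if_pos hjm]; ring
      · have : (((j + 1 : ℕ) : ℤ) - ((N : ℤ) + 1 - j)).sign = 1 := by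
          rw [Int.sign_eq_one_iff_pos]; push_cast; omega
        rw [this, if_neg hjm]; ring
    · have hne1 : ¬ Odd (j + 1) := by
        rw [Nat.odd_iff] at ho ⊢; omega
      rw [if_neg hne1, if_pos ho, Even.neg_one_pow (by simpa using ho.add_one)]
      have hcast : ((N + 1 - (j + 1) : ℕ) : ℤ) = (N : ℤ) - j := by omega
      rw [hcast]
      by_cases hjm : j ≤ m
      · have : ((N : ℤ) - (j : ℤ) - (j : ℕ)).sign = 1 := by
          rw [Int.sign_eq_one_iff_pos]; omega
        rw [this, if_pos hjm]; ring
      · have : ((N : ℤ) - (j : ℤ) - (j : ℕ)).sign = -1 := by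
          rw [Int.sign_eq_neg_one_iff_neg]; omega
        rw [this, if_neg hjm]; ring
  -- the formula
  have hmin : ∀ j, 1 ≤ j → j ≤ N → i j = min ((j : ℤ) - 1) ((N : ℤ) - j) := by
    intro j hj1
    induction j, hj1 using Nat.le_induction with
    | base => intro _; rw [h1]; push_cast; omega
    | succ n hn ih =>
      intro hnN
      have hlt : n < N := by omega
      rw [hstep n hn hlt, ih (by omega)]
      by_cases hnm : n ≤ m
      · rw [if_pos hnm]; push_cast; omega
      · rw [if_neg hnm]; push_cast; omega
  refine ⟨hbij, hinv, hσ1, hσN, hmin, ?_, ?_, ?_, ?_⟩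
  · intro j hj1 hjN
    rw [hmin j hj1 hjN]; omega
  · rw [hmin N (by omega) le_rfl]; omega
  · rw [hmin (m + 1) (by omega) (by omega)]; push_cast; omega
  · intro j hj1 hjN hval
    rw [hmin j hj1 hjN] at hval; omega
end
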